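/- arXiv:1709.04115 — 2 statements merged into one kernel-verified Lean document; each statement's English description precedes it below -/
import Mathlib

section
/- Let B : ℤ × ℝ → ℝ with each B(k,·) continuous, and define the last passage energy M(x,i;y,j) as the supremum over nondecreasing lists as usual. Then for integers i ≤ j and reals x₁ ≤ x₂ ≤ y: B(i,x₂) - B(i,x₁) ≤ M(x₁,i;y,j) - M(x₂,i;y,j) ≤ ∑_{k=i}^{j} ( sup_{z ∈ [x₁,x₂]} B(k,z) - inf_{z ∈ [x₁,x₂]} B(k,z) ). -/
/-- The energy of a staircase encoded by the nondecreasing list `z`: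
`∑_{k=i}^{j} (B(k, z_{k+1}) - B(k, z_k))`. -/
noncomputable def lppEnergy (B : ℤ → ℝ → ℝ) (i j : ℤ) (z : ℤ → ℝ) : ℝ :=
  ∑ k ∈ Finset.Icc i j, (B k (z (k + 1)) - B k (z k))

/-- A list `z` is admissible for the journey from `(x,i)` to `(y,j)`: it starts at `x`,
ends at `y`, is nondecreasing, and takes values in `[x,y]`. -/
def lppAdmissible (x : ℝ) (i : ℤ) (y : ℝ) (j : ℤ) (z : ℤ → ℝ) : Prop :=
  z i = x ∧ z (j + 1) = y ∧ (∀ k, i ≤ k → k ≤ j → z k ≤ z (k + 1)) ∧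
    (∀ k, i ≤ k → k ≤ j + 1 → z k ∈ Set.Icc x y)

/-- The last passage energy `M(x,i;y,j)`: the supremum of the staircase energies over
all admissible nondecreasing lists. -/
noncomputable def lppM (B : ℤ → ℝ → ℝ) (x : ℝ) (i : ℤ) (y : ℝ) (j : ℤ) : ℝ :=
  sSup {e : ℝ | ∃ z : ℤ → ℝ, lppAdmissible x i y j z ∧ e = lppEnergy B i j z}

open Set

lemma lpp_diff_le_osc {f : ℝ → ℝ} (hf : Continuous f) {x y a b : ℝ}
    (ha : a ∈ Icc x y) (hb : b ∈ Icc x y) :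
    f a - f b ≤ sSup (f '' Icc x y) - sInf (f '' Icc x y) := by
  have hbdd : BddAbove (f '' Icc x y) := (isCompact_Icc.image hf).bddAbove
  have hbdd' : BddBelow (f '' Icc x y) := (isCompact_Icc.image hf).bddBelow
  have h1 : f a ≤ sSup (f '' Icc x y) := le_csSup hbdd ⟨a, ha, rfl⟩
  have h2 : sInf (f '' Icc x y) ≤ f b := csInf_le hbdd' ⟨b, hb, rfl⟩
  linarith

lemma lpp_exists (i j : ℤ) (x y : ℝ) (hij : i ≤ j) (hxy : x ≤ y) :
    ∃ z, lppAdmissible x i y j z := by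
  refine ⟨fun k => if k ≤ j then x else y, by simp [hij], by simp, ?_, ?_⟩
  · intro k hik hkj
    simp only [hkj, if_true]
    split <;> [exact le_refl x; exact hxy]
  · intro k hik hkj
    by_cases h : k ≤ j <;> simp [h, hxy]

lemma lpp_le_bound (B : ℤ → ℝ → ℝ) (hB : ∀ k, Continuous (B k)) (i j : ℤ) {x y : ℝ}
    (hxy : x ≤ y) :
    ∀ e ∈ {e : ℝ | ∃ z, lppAdmissible x i y j z ∧ e = lppEnergy B i j z},
      e ≤ ∑ k ∈ Finset.Icc i j, (sSup (B k '' Icc x y) - sInf (B k '' Icc x y)) := by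
  rintro e ⟨z, ⟨hzi, hzj, hmono, hmem⟩, rfl⟩
  refine Finset.sum_le_sum ?_
  intro k hk
  rw [Finset.mem_Icc] at hk
  exact lpp_diff_le_osc (hB k)
    (hmem (k + 1) (by linarith [hk.1]) (by linarith [hk.2]))
    (hmem k hk.1 (by linarith [hk.2]))

lemma lpp_bddAbove (B : ℤ → ℝ → ℝ) (hB : ∀ k, Continuous (B k)) (i j : ℤ) {x y : ℝ}
    (hxy : x ≤ y) :
    BddAbove {e : ℝ | ∃ z, lppAdmissible x i y j z ∧ e = lppEnergy B i j z} :=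
  ⟨_, lpp_le_bound B hB i j hxy⟩

lemma lpp_max_term_le {f : ℝ → ℝ} (hf : Continuous f) {x₁ x₂ a b : ℝ} (h12 : x₁ ≤ x₂)
    (ha1 : x₁ ≤ a) (hab : a ≤ b) :
    f b - f a - (f (max b x₂) - f (max a x₂)) ≤
      sSup (f '' Icc x₁ x₂) - sInf (f '' Icc x₁ x₂) := by
  have hosc : (0:ℝ) ≤ sSup (f '' Icc x₁ x₂) - sInf (f '' Icc x₁ x₂) := by
    have := lpp_diff_le_osc hf (x := x₁) (y := x₂) ⟨le_refl x₁, h12⟩ ⟨le_refl x₁, h12⟩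
    linarith
  rcases le_or_gt x₂ a with h | h
  · rw [max_eq_left (h.trans hab), max_eq_left h]
    linarith
  · rcases le_or_gt x₂ b with h' | h'
    · rw [max_eq_left h', max_eq_right h.le]
      have := lpp_diff_le_osc hf (x := x₁) (y := x₂)
        ⟨h12, le_refl x₂⟩ ⟨ha1, h.le⟩
      linarith
    · rw [max_eq_right h'.le, max_eq_right h.le]
      have := lpp_diff_le_osc hf (x := x₁) (y := x₂)
        ⟨ha1.trans hab, h'.le⟩ ⟨ha1, h.le⟩
      linarith

/-- Sandwich bound for the last passage energy under a change of the starting point: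
for `x₁ ≤ x₂ ≤ y`,
`B(i,x₂) - B(i,x₁) ≤ M(x₁,i;y,j) - M(x₂,i;y,j)
  ≤ ∑_{k=i}^{j} (sup_{[x₁,x₂]} B(k,·) - inf_{[x₁,x₂]} B(k,·))`. -/
theorem lppM_startpoint_sandwich (B : ℤ → ℝ → ℝ) (hB : ∀ k : ℤ, Continuous (B k))
    (i j : ℤ) (hij : i ≤ j) (x₁ x₂ y : ℝ) (h12 : x₁ ≤ x₂) (h2y : x₂ ≤ y) :
    B i x₂ - B i x₁ ≤ lppM B x₁ i y j - lppM B x₂ i y j ∧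
      lppM B x₁ i y j - lppM B x₂ i y j ≤
        ∑ k ∈ Finset.Icc i j,
          (sSup (B k '' Set.Icc x₁ x₂) - sInf (B k '' Set.Icc x₁ x₂)) := by
  have h1y : x₁ ≤ y := h12.trans h2y
  set S₁ := {e : ℝ | ∃ z, lppAdmissible x₁ i y j z ∧ e = lppEnergy B i j z} with hS₁
  set S₂ := {e : ℝ | ∃ z, lppAdmissible x₂ i y j z ∧ e = lppEnergy B i j z} with hS₂
  have hne1 : S₁.Nonempty := by
    obtain ⟨z, hz⟩ := lpp_exists i j x₁ y hij h1y
    exact ⟨lppEnergy B i j z, z, hz, rfl⟩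
  have hne2 : S₂.Nonempty := by
    obtain ⟨z, hz⟩ := lpp_exists i j x₂ y hij h2y
    exact ⟨lppEnergy B i j z, z, hz, rfl⟩
  have hbdd1 : BddAbove S₁ := lpp_bddAbove B hB i j h1y
  have hbdd2 : BddAbove S₂ := lpp_bddAbove B hB i j h2y
  constructor
  · -- lower bound
    have key : ∀ e ∈ S₂, e ≤ lppM B x₁ i y j - (B i x₂ - B i x₁) := by
      rintro e ⟨z, ⟨hzi, hzj, hmono, hmem⟩, rfl⟩
      set z' : ℤ → ℝ := Function.update z i x₁ with hz'
      have hz'i : z' i = x₁ := Function.update_self i x₁ z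
      have hz'ne : ∀ k : ℤ, k ≠ i → z' k = z k := fun k hk => Function.update_of_ne hk x₁ z
      have hadm : lppAdmissible x₁ i y j z' := by
        refine ⟨hz'i, ?_, ?_, ?_⟩
        · rw [hz'ne (j+1) (by omega), hzj]
        · intro k hik hkj
          rcases eq_or_lt_of_le hik with heq | hlt
          · subst heq
            rw [hz'i, hz'ne (i+1) (by omega)]
            have := (hmem (i+1) (by omega) (by omega)).1
            linarith
          · rw [hz'ne k (by omega), hz'ne (k+1) (by omega)]
            exact hmono k hik hkj
        · intro k hik hkj
          rcases eq_or_lt_of_le hik with heq | hlt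
          · subst heq
            rw [hz'i]; exact ⟨le_refl x₁, h1y⟩
          · rw [hz'ne k (by omega)]
            obtain ⟨hl, hr⟩ := hmem k hik hkj
            exact ⟨h12.trans hl, hr⟩
      have hE : lppEnergy B i j z' = lppEnergy B i j z + (B i x₂ - B i x₁) := by
        have : lppEnergy B i j z' - lppEnergy B i j z
            = ∑ k ∈ Finset.Icc i j,
              ((B k (z' (k+1)) - B k (z' k)) - (B k (z (k+1)) - B k (z k))) := by
          rw [Finset.sum_sub_distrib]
          rfl
        have heach : ∀ k ∈ Finset.Icc i j,
            (B k (z' (k+1)) - B k (z' k)) - (B k (z (k+1)) - B k (z k))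
              = if k = i then B i x₂ - B i x₁ else 0 := by
          intro k hk
          rw [Finset.mem_Icc] at hk
          rw [hz'ne (k+1) (by omega)]
          by_cases hki : k = i
          · subst hki
            rw [hz'i, hzi, if_pos rfl]
            ring
          · rw [hz'ne k hki, if_neg hki]
            ring
        rw [Finset.sum_congr rfl heach, Finset.sum_ite_eq' (Finset.Icc i j) i
          (fun _ => B i x₂ - B i x₁), if_pos (by rw [Finset.mem_Icc]; exact ⟨le_refl i, hij⟩)]
          at this
        linarith
      have hmemS : lppEnergy B i j z' ∈ S₁ := ⟨z', hadm, rfl⟩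
      have := le_csSup hbdd1 hmemS
      rw [hE] at this
      have : lppEnergy B i j z + (B i x₂ - B i x₁) ≤ lppM B x₁ i y j := this
      linarith
    have := csSup_le hne2 key
    have h2 : lppM B x₂ i y j ≤ lppM B x₁ i y j - (B i x₂ - B i x₁) := this
    linarith
  · -- upper bound
    have key : ∀ e ∈ S₁, e ≤ lppM B x₂ i y j +
        ∑ k ∈ Finset.Icc i j, (sSup (B k '' Icc x₁ x₂) - sInf (B k '' Icc x₁ x₂)) := by
      rintro e ⟨z, ⟨hzi, hzj, hmono, hmem⟩, rfl⟩
      set z' : ℤ → ℝ := fun k => max (z k) x₂ with hz'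
      have hadm : lppAdmissible x₂ i y j z' := by
        refine ⟨?_, ?_, ?_, ?_⟩
        · simp only [hz', hzi, max_eq_right h12]
        · simp only [hz', hzj, max_eq_left h2y]
        · intro k hik hkj
          exact max_le_max (hmono k hik hkj) (le_refl x₂)
        · intro k hik hkj
          exact ⟨le_max_right _ _, max_le (hmem k hik hkj).2 h2y⟩
      have hE : lppEnergy B i j z - lppEnergy B i j z' ≤
          ∑ k ∈ Finset.Icc i j, (sSup (B k '' Icc x₁ x₂) - sInf (B k '' Icc x₁ x₂)) := by
        have hdist : lppEnergy B i j z - lppEnergy B i j z'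
            = ∑ k ∈ Finset.Icc i j,
              ((B k (z (k+1)) - B k (z k)) - (B k (z' (k+1)) - B k (z' k))) := by
          rw [Finset.sum_sub_distrib]; rfl
        rw [hdist]
        refine Finset.sum_le_sum ?_
        intro k hk
        rw [Finset.mem_Icc] at hk
        have h1 : x₁ ≤ z k := (hmem k hk.1 (by omega)).1
        have h2 : z k ≤ z (k+1) := hmono k hk.1 hk.2
        have := lpp_max_term_le (hB k) h12 h1 h2
        simpa [hz'] using this
      have hmemS : lppEnergy B i j z' ∈ S₂ := ⟨z', hadm, rfl⟩
      have hle : lppEnergy B i j z' ≤ lppM B x₂ i y j := le_csSup hbdd2 hmemS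
      linarith
    have := csSup_le hne1 key
    have h2 : lppM B x₁ i y j ≤ lppM B x₂ i y j +
        ∑ k ∈ Finset.Icc i j, (sSup (B k '' Icc x₁ x₂) - sInf (B k '' Icc x₁ x₂)) := this
    linarith
end

section
/- Let a > 0, and let g : (0, e^{-4/3}) → (0,∞) be given by g(ε) = 2a·ε^{1/2}(log ε^{-1})^{2/3}. Let ζ ∈ (0, e^{-4/3}] and let X : [-1,1] → ℝ be a function such that for every ρ ∈ (0, ζ) and every pair y, z ∈ [-1,1] with 0 < z - y ≤ ρ, one has |X(z) - X(y)| ≤ g(2ρ). Then for all y, z ∈ [-1,1] with 0 < z - y ≤ e^{-1} and ζ ≤ 1/2, one has |X(z) - X(y)| ≤ 2^{8/3}·a·ζ^{-1/2}(log ζ^{-1})^{2/3}·(z-y)^{1/2}(log (z-y)^{-1})^{2/3}. -/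
set_option maxHeartbeats 1600000

/-- Telescoping/chaining lemma: if each of `K` consecutive increments of step `h`
is bounded by `B`, then the total increment is bounded by `K * B`. -/
lemma chain_aux (X : ℝ → ℝ) (y h B : ℝ) :
    ∀ K : ℕ, (∀ i : ℕ, i < K → |X (y + ((i : ℝ) + 1) * h) - X (y + (i : ℝ) * h)| ≤ B) →
      |X (y + (K : ℝ) * h) - X y| ≤ (K : ℝ) * B := by
  intro K
  induction K with
  | zero => intro _; simp
  | succ n ih =>
    intro hstep
    have h1 : |X (y + (n : ℝ) * h) - X y| ≤ (n : ℝ) * B :=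
      ih fun i hi => hstep i (by omega)
    have h2 : |X (y + ((n : ℝ) + 1) * h) - X (y + (n : ℝ) * h)| ≤ B :=
      hstep n (by omega)
    have : |X (y + ((n : ℝ) + 1) * h) - X y| ≤ B + (n : ℝ) * B := by
      calc |X (y + ((n : ℝ) + 1) * h) - X y|
          ≤ |X (y + ((n : ℝ) + 1) * h) - X (y + (n : ℝ) * h)| +
            |X (y + (n : ℝ) * h) - X y| := abs_sub_le _ _ _
        _ ≤ B + (n : ℝ) * B := add_le_add h2 h1
    push_cast
    linarith

/-- Chaining bound: if a function `X` on `[-1,1]` admits, at every scale `ρ ∈ (0,ζ)`,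
the modulus of continuity `g(2ρ) = 2a (2ρ)^{1/2} (log (2ρ)⁻¹)^{2/3}`, then for
`0 < z - y ≤ e⁻¹` (and `ζ ≤ 1/2`),
`|X(z) - X(y)| ≤ 2^{8/3} a ζ^{-1/2} (log ζ⁻¹)^{2/3} (z-y)^{1/2} (log (z-y)⁻¹)^{2/3}`. -/
theorem chaining_modulus_bound (a ζ : ℝ) (X : ℝ → ℝ) (ha : 0 < a)
    (hζ0 : 0 < ζ) (hζe : ζ ≤ Real.exp (-(4 : ℝ) / 3)) (hζhalf : ζ ≤ 1 / 2)
    (hmod : ∀ ρ : ℝ, 0 < ρ → ρ < ζ →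
      ∀ y z : ℝ, y ∈ Set.Icc (-1 : ℝ) 1 → z ∈ Set.Icc (-1 : ℝ) 1 →
        0 < z - y → z - y ≤ ρ →
        |X z - X y| ≤ 2 * a * (2 * ρ) ^ ((1 : ℝ) / 2) *
          (Real.log (2 * ρ)⁻¹) ^ ((2 : ℝ) / 3)) :
    ∀ y z : ℝ, y ∈ Set.Icc (-1 : ℝ) 1 → z ∈ Set.Icc (-1 : ℝ) 1 →
      0 < z - y → z - y ≤ Real.exp (-1) →
      |X z - X y| ≤ (2 : ℝ) ^ ((8 : ℝ) / 3) * a * ζ ^ (-(1 : ℝ) / 2) *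
        (Real.log ζ⁻¹) ^ ((2 : ℝ) / 3) * (z - y) ^ ((1 : ℝ) / 2) *
        (Real.log (z - y)⁻¹) ^ ((2 : ℝ) / 3) := by
  intro y z hy hz hzy hze
  set d : ℝ := z - y with hd
  have hd0 : 0 < d := hzy
  set M : ℝ := Real.log ζ⁻¹ with hMdef
  set N : ℝ := Real.log d⁻¹ with hNdef
  -- basic facts about M and N
  have hM43 : (4 : ℝ) / 3 ≤ M := by
    have h1 : Real.log ζ ≤ -(4 : ℝ) / 3 := by
      calc Real.log ζ ≤ Real.log (Real.exp (-(4 : ℝ) / 3)) := Real.log_le_log hζ0 hζe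
        _ = -(4 : ℝ) / 3 := Real.log_exp _
    rw [hMdef, Real.log_inv]; linarith
  have hM0 : 0 ≤ M := by linarith
  have hM23 : (1 : ℝ) ≤ M ^ ((2 : ℝ) / 3) :=
    Real.one_le_rpow (by linarith) (by norm_num)
  have hN1 : (1 : ℝ) ≤ N := by
    have h1 : Real.log d ≤ -1 := by
      calc Real.log d ≤ Real.log (Real.exp (-1)) := Real.log_le_log hd0 hze
        _ = -1 := Real.log_exp _
    rw [hNdef, Real.log_inv]; linarith
  have hN23 : (1 : ℝ) ≤ N ^ ((2 : ℝ) / 3) :=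
    Real.one_le_rpow hN1 (by norm_num)
  -- rewrite powers via sqrt
  have hζpow : ζ ^ (-(1 : ℝ) / 2) = (Real.sqrt ζ)⁻¹ := by
    rw [Real.sqrt_eq_rpow, neg_div, Real.rpow_neg hζ0.le]
  have hdpow : d ^ ((1 : ℝ) / 2) = Real.sqrt d := (Real.sqrt_eq_rpow d).symm
  have hsqζ0 : 0 < Real.sqrt ζ := Real.sqrt_pos.mpr hζ0
  have hsqζinv1 : (1 : ℝ) ≤ (Real.sqrt ζ)⁻¹ :=
    (one_le_inv₀ hsqζ0).mpr (Real.sqrt_le_one.mpr (by linarith))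
  have hsqd0 : 0 ≤ Real.sqrt d := Real.sqrt_nonneg d
  -- √d ≤ 5/8
  have hsqd58 : Real.sqrt d ≤ 5 / 8 := by
    have he : Real.exp (-1) ≤ 25 / 64 := by
      rw [Real.exp_neg]
      rw [inv_le_comm₀ (Real.exp_pos 1) (by norm_num)]
      have := Real.exp_one_gt_d9
      linarith
    calc Real.sqrt d ≤ Real.sqrt (25 / 64) := Real.sqrt_le_sqrt (by linarith)
      _ = 5 / 8 := by
          rw [show (25 : ℝ) / 64 = (5 / 8) ^ 2 by norm_num, Real.sqrt_sq (by norm_num)]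
  -- √2 facts
  have hsqrt2 : (75 : ℝ) / 64 ≤ Real.sqrt 2 := by
    rw [Real.le_sqrt (by norm_num) (by norm_num)]; norm_num
  have h283 : 4 * Real.sqrt 2 ≤ (2 : ℝ) ^ ((8 : ℝ) / 3) := by
    have h1 : (2 : ℝ) ^ ((1 : ℝ) / 2) ≤ (2 : ℝ) ^ ((2 : ℝ) / 3) :=
      Real.rpow_le_rpow_of_exponent_le (by norm_num) (by norm_num)
    have h2 : (2 : ℝ) ^ ((8 : ℝ) / 3) = (2 : ℝ) ^ (2 : ℝ) * (2 : ℝ) ^ ((2 : ℝ) / 3) := by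
      rw [← Real.rpow_add (by norm_num)]; norm_num
    have h3 : (2 : ℝ) ^ (2 : ℝ) = 4 := by
      rw [show (2 : ℝ) = ((2 : ℕ) : ℝ) from by norm_num, Real.rpow_natCast]; norm_num
    rw [h2, h3, Real.sqrt_eq_rpow]
    nlinarith [Real.rpow_nonneg (show (0:ℝ) ≤ 2 by norm_num) ((2:ℝ)/3)]
  have hcoef : (75 : ℝ) / 16 ≤ (2 : ℝ) ^ ((8 : ℝ) / 3) := by
    nlinarith
  rcases lt_or_ge d ζ with hcase | hcase
  · -- small case: apply hmod directly with ρ = d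
    have key := hmod d hd0 hcase y z hy hz hzy le_rfl
    have h2d1 : 2 * d ≤ 1 := by linarith
    have hL : Real.log (2 * d)⁻¹ ≤ N := by
      rw [hNdef]
      exact Real.log_le_log (by positivity) (by
        rw [inv_le_inv₀ (by linarith) hd0]; linarith)
    have hL0 : 0 ≤ Real.log (2 * d)⁻¹ :=
      Real.log_nonneg (by rw [le_inv_comm₀ (by norm_num) (by positivity)]; linarith)
    have hpow2d : (2 * d) ^ ((1 : ℝ) / 2) = Real.sqrt 2 * Real.sqrt d := by
      rw [← Real.sqrt_eq_rpow, Real.sqrt_mul (by norm_num)]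
    have hLpow : (Real.log (2 * d)⁻¹) ^ ((2 : ℝ) / 3) ≤ N ^ ((2 : ℝ) / 3) :=
      Real.rpow_le_rpow hL0 hL (by norm_num)
    calc |X z - X y|
        ≤ 2 * a * (2 * d) ^ ((1 : ℝ) / 2) * (Real.log (2 * d)⁻¹) ^ ((2 : ℝ) / 3) := key
      _ = (2 * Real.sqrt 2) * (a * Real.sqrt d * (Real.log (2 * d)⁻¹) ^ ((2 : ℝ) / 3)) := by
          rw [hpow2d]; ring
      _ ≤ (2 * Real.sqrt 2) * (a * Real.sqrt d * N ^ ((2 : ℝ) / 3)) := by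
          apply mul_le_mul_of_nonneg_left _ (by positivity)
          apply mul_le_mul_of_nonneg_left hLpow (by positivity)
      _ ≤ ((2 : ℝ) ^ ((8 : ℝ) / 3) * (Real.sqrt ζ)⁻¹ * M ^ ((2 : ℝ) / 3)) *
            (a * Real.sqrt d * N ^ ((2 : ℝ) / 3)) := by
          apply mul_le_mul_of_nonneg_right _ (by positivity)
          have hs2 : Real.sqrt 2 ≤ 2 := by
            calc Real.sqrt 2 ≤ Real.sqrt 4 := Real.sqrt_le_sqrt (by norm_num)
              _ = 2 := by
                  rw [show (4 : ℝ) = 2 ^ 2 by norm_num, Real.sqrt_sq (by norm_num)]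
          have hsq2nn : (1 : ℝ) ≤ Real.sqrt 2 := by
            rw [Real.one_le_sqrt] <;> norm_num
          have hP4 : (4 : ℝ) ≤ (2 : ℝ) ^ ((8 : ℝ) / 3) := by linarith
          have hP0 : (0 : ℝ) < (2 : ℝ) ^ ((8 : ℝ) / 3) := by linarith
          calc 2 * Real.sqrt 2 ≤ 4 := by linarith
            _ ≤ (2 : ℝ) ^ ((8 : ℝ) / 3) := hP4
            _ ≤ (2 : ℝ) ^ ((8 : ℝ) / 3) * (Real.sqrt ζ)⁻¹ := le_mul_of_one_le_right hP0.le hsqζinv1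
            _ ≤ (2 : ℝ) ^ ((8 : ℝ) / 3) * (Real.sqrt ζ)⁻¹ * M ^ ((2 : ℝ) / 3) :=
                le_mul_of_one_le_right (by positivity) hM23
      _ = (2 : ℝ) ^ ((8 : ℝ) / 3) * a * ζ ^ (-(1 : ℝ) / 2) * M ^ ((2 : ℝ) / 3) *
            d ^ ((1 : ℝ) / 2) * N ^ ((2 : ℝ) / 3) := by
          rw [hζpow, hdpow]; ring
  · -- chaining case: ζ ≤ d
    set K : ℕ := ⌈2 * d / ζ⌉₊ with hKdef
    have hdζ1 : (1 : ℝ) ≤ d / ζ := (one_le_div hζ0).mpr hcase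
    have hKge : 2 * d / ζ ≤ (K : ℝ) := Nat.le_ceil _
    have hKle : (K : ℝ) ≤ 3 * d / ζ := by
      have h1 : (K : ℝ) < 2 * d / ζ + 1 := Nat.ceil_lt_add_one (by positivity)
      have e1 : 2 * d / ζ = 2 * (d / ζ) := by ring
      have e2 : 3 * d / ζ = 3 * (d / ζ) := by ring
      linarith
    have hK0 : 0 < (K : ℝ) := by
      have : (0 : ℝ) < 2 * d / ζ := by positivity
      linarith
    have hKne : (K : ℝ) ≠ 0 := ne_of_gt hK0
    set h : ℝ := d / K with hhdef
    have hh0 : 0 < h := by positivity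
    have hhalf : h ≤ ζ / 2 := by
      rw [hhdef, div_le_div_iff₀ hK0 (by norm_num : (0:ℝ) < 2)]
      have := (div_le_iff₀ hζ0).mp hKge
      linarith
    have hhζ : h < ζ := lt_of_le_of_lt hhalf (by linarith)
    have hthird : ζ / 3 ≤ h := by
      rw [hhdef, div_le_div_iff₀ (by norm_num : (0:ℝ) < 3) hK0]
      have := (le_div_iff₀ hζ0).mp hKle
      linarith
    have hyz : y + (K : ℝ) * h = z := by
      rw [hhdef, mul_div_cancel₀ _ hKne]; rw [hd]; ring
    -- step bound
    set B : ℝ := 2 * a * (2 * h) ^ ((1 : ℝ) / 2) * (Real.log (2 * h)⁻¹) ^ ((2 : ℝ) / 3)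
      with hBdef
    have hstep : ∀ i : ℕ, i < K →
        |X (y + ((i : ℝ) + 1) * h) - X (y + (i : ℝ) * h)| ≤ B := by
      intro i hi
      have hi1 : (i : ℝ) + 1 ≤ (K : ℝ) := by exact_mod_cast Nat.succ_le_of_lt hi
      have hi0 : (0 : ℝ) ≤ (i : ℝ) := Nat.cast_nonneg i
      have hyi : y + (i : ℝ) * h ∈ Set.Icc (-1 : ℝ) 1 := by
        constructor
        · have := hy.1; nlinarith
        · have h1 : y + (i : ℝ) * h ≤ y + (K : ℝ) * h := by nlinarith
          rw [hyz] at h1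
          exact le_trans h1 hz.2
      have hyi1 : y + ((i : ℝ) + 1) * h ∈ Set.Icc (-1 : ℝ) 1 := by
        constructor
        · have := hy.1; nlinarith
        · have h1 : y + ((i : ℝ) + 1) * h ≤ y + (K : ℝ) * h := by nlinarith
          rw [hyz] at h1
          exact le_trans h1 hz.2
      have hd1 : (y + ((i : ℝ) + 1) * h) - (y + (i : ℝ) * h) = h := by ring
      have := hmod h hh0 hhζ (y + (i : ℝ) * h) (y + ((i : ℝ) + 1) * h) hyi hyi1
        (by rw [hd1]; exact hh0) (by rw [hd1])
      rwa [hBdef]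
    have hchain : |X z - X y| ≤ (K : ℝ) * B := by
      have := chain_aux X y h B K hstep
      rwa [hyz] at this
    -- now estimate K * B
    set L : ℝ := Real.log (2 * h)⁻¹ with hLdef
    have h2h0 : 0 < 2 * h := by linarith
    have hL0 : 0 ≤ L := by
      apply Real.log_nonneg
      rw [le_inv_comm₀ (by norm_num) h2h0]
      linarith
    -- L ≤ (3/2) M
    have hlog32 : Real.log (3 / 2) ≤ 2 / 3 := by
      rw [Real.log_le_iff_le_exp (by norm_num)]
      have := Real.add_one_le_exp ((2 : ℝ) / 3)
      linarith
    have hLM : L ≤ 3 / 2 * M := by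
      have h1 : (2 * h)⁻¹ ≤ 3 / 2 * ζ⁻¹ := by
        have e : (3 : ℝ) / 2 * ζ⁻¹ = (2 * ζ / 3)⁻¹ := by
          rw [← one_div, ← one_div]
          field_simp
        rw [e, inv_le_inv₀ h2h0 (by positivity)]
        linarith
      have h4 : L ≤ Real.log (3 / 2 * ζ⁻¹) := Real.log_le_log (by positivity) h1
      have h5 : Real.log (3 / 2 * ζ⁻¹) = Real.log (3 / 2) + M := by
        rw [hMdef, Real.log_mul (by norm_num) (by positivity)]
      have h6 : Real.log (3 / 2) ≤ M / 2 := by linarith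
      linarith
    have hLpow : L ^ ((2 : ℝ) / 3) ≤ (3 / 2) * M ^ ((2 : ℝ) / 3) := by
      calc L ^ ((2 : ℝ) / 3) ≤ (3 / 2 * M) ^ ((2 : ℝ) / 3) :=
            Real.rpow_le_rpow hL0 hLM (by norm_num)
        _ = (3 / 2) ^ ((2 : ℝ) / 3) * M ^ ((2 : ℝ) / 3) :=
            Real.mul_rpow (by norm_num) hM0
        _ ≤ (3 / 2) * M ^ ((2 : ℝ) / 3) := by
            apply mul_le_mul_of_nonneg_right _ (Real.rpow_nonneg hM0 _)
            calc (3 / 2 : ℝ) ^ ((2 : ℝ) / 3) ≤ (3 / 2 : ℝ) ^ ((1 : ℝ)) :=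
                  Real.rpow_le_rpow_of_exponent_le (by norm_num) (by norm_num)
              _ = 3 / 2 := Real.rpow_one _
    -- K * √(2h) ≤ √6 * d * (√ζ)⁻¹
    have hKsq : (K : ℝ) * Real.sqrt (2 * h) ≤ Real.sqrt 6 * d * (Real.sqrt ζ)⁻¹ := by
      have e1 : (K : ℝ) * Real.sqrt (2 * h) = Real.sqrt (2 * (K : ℝ) * d) := by
        rw [show 2 * (K : ℝ) * d = (K : ℝ) ^ 2 * (2 * h) by
              rw [hhdef]; field_simp]
        rw [Real.sqrt_mul (sq_nonneg _), Real.sqrt_sq hK0.le]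
      have e2 : 2 * (K : ℝ) * d ≤ 6 * d ^ 2 * ζ⁻¹ := by
        have h1 : (K : ℝ) ≤ 3 * d * ζ⁻¹ := by
          rw [show 3 * d * ζ⁻¹ = 3 * d / ζ by ring]; exact hKle
        nlinarith
      have e3 : Real.sqrt (6 * d ^ 2 * ζ⁻¹) = Real.sqrt 6 * d * (Real.sqrt ζ)⁻¹ := by
        rw [Real.sqrt_mul (by positivity), Real.sqrt_mul (by norm_num),
          Real.sqrt_sq hd0.le, Real.sqrt_inv]
      rw [e1, ← e3]
      exact Real.sqrt_le_sqrt e2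
    have hsq6 : Real.sqrt 6 ≤ 5 / 2 := by
      calc Real.sqrt 6 ≤ Real.sqrt (25 / 4) := Real.sqrt_le_sqrt (by norm_num)
        _ = 5 / 2 := by
            rw [show (25 : ℝ) / 4 = (5 / 2) ^ 2 by norm_num, Real.sqrt_sq (by norm_num)]
    -- put it together
    have hdsplit : d = Real.sqrt d * Real.sqrt d := (Real.mul_self_sqrt hd0.le).symm
    have hpow2h : (2 * h) ^ ((1 : ℝ) / 2) = Real.sqrt (2 * h) :=
      (Real.sqrt_eq_rpow _).symm
    calc |X z - X y| ≤ (K : ℝ) * B := hchain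
      _ = 2 * a * ((K : ℝ) * Real.sqrt (2 * h)) * L ^ ((2 : ℝ) / 3) := by
          rw [hBdef, hpow2h]; ring
      _ ≤ 2 * a * (Real.sqrt 6 * d * (Real.sqrt ζ)⁻¹) * L ^ ((2 : ℝ) / 3) := by
          apply mul_le_mul_of_nonneg_right _ (Real.rpow_nonneg hL0 _)
          apply mul_le_mul_of_nonneg_left hKsq (by positivity)
      _ ≤ 2 * a * (Real.sqrt 6 * d * (Real.sqrt ζ)⁻¹) * ((3 / 2) * M ^ ((2 : ℝ) / 3)) := by
          apply mul_le_mul_of_nonneg_left hLpow (by positivity)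
      _ = (3 * Real.sqrt 6 * Real.sqrt d) *
            (a * (Real.sqrt ζ)⁻¹ * M ^ ((2 : ℝ) / 3) * Real.sqrt d) := by
          have hms : Real.sqrt d * Real.sqrt d = d := Real.mul_self_sqrt hd0.le
          linear_combination (3 * a * Real.sqrt 6 * (Real.sqrt ζ)⁻¹ * M ^ ((2 : ℝ) / 3)) *
            hms.symm
      _ ≤ ((2 : ℝ) ^ ((8 : ℝ) / 3)) *
            (a * (Real.sqrt ζ)⁻¹ * M ^ ((2 : ℝ) / 3) * Real.sqrt d) := by
          apply mul_le_mul_of_nonneg_right _ (by positivity)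
          have h6' : (0 : ℝ) ≤ Real.sqrt 6 := Real.sqrt_nonneg _
          calc 3 * Real.sqrt 6 * Real.sqrt d ≤ 3 * (5 / 2) * (5 / 8) := by nlinarith
            _ = 75 / 16 := by norm_num
            _ ≤ (2 : ℝ) ^ ((8 : ℝ) / 3) := hcoef
      _ ≤ ((2 : ℝ) ^ ((8 : ℝ) / 3)) *
            (a * (Real.sqrt ζ)⁻¹ * M ^ ((2 : ℝ) / 3) * Real.sqrt d) * N ^ ((2 : ℝ) / 3) := by
          have hnn : (0 : ℝ) ≤ (2 : ℝ) ^ ((8 : ℝ) / 3) *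
              (a * (Real.sqrt ζ)⁻¹ * M ^ ((2 : ℝ) / 3) * Real.sqrt d) := by positivity
          exact le_mul_of_one_le_right hnn hN23
      _ = (2 : ℝ) ^ ((8 : ℝ) / 3) * a * ζ ^ (-(1 : ℝ) / 2) * M ^ ((2 : ℝ) / 3) *
            d ^ ((1 : ℝ) / 2) * N ^ ((2 : ℝ) / 3) := by
          rw [hζpow, hdpow]; ring
end
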